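/- arXiv:math/0605158 — 2 statements merged into one kernel-verified Lean document; each statement's English description precedes it below -/
import Mathlib

section
/- For real numbers ξ, ξ₁ with |ξ| ≤ C₀ and |ξ₁ - 2^k| ≤ C₀ (k a positive integer, 2^k ≥ 2C₀), with ω(ξ) = -ξ|ξ|, one has |ω(ξ₁) + ω(ξ - ξ₁) + 2^(k+1)·ξ| ≤ C for a constant C depending only on C₀. -/
/-- The Benjamin–Ono dispersion symbol `ω(ξ) = -ξ|ξ|`. -/
noncomputable def omegaBO (ξ : ℝ) : ℝ := -ξ * |ξ|

theorem resonance_identity_low_high (C₀ : ℝ) (hC₀ : 0 < C₀) :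
    ∃ C : ℝ, 0 < C ∧ ∀ k : ℕ, 0 < k → 2 * C₀ ≤ (2:ℝ)^k → ∀ ξ ξ₁ : ℝ,
      |ξ| ≤ C₀ → |ξ₁ - (2:ℝ)^k| ≤ C₀ →
      |omegaBO ξ₁ + omegaBO (ξ - ξ₁) + (2:ℝ)^(k+1) * ξ| ≤ C := by
  refine ⟨3 * C₀^2, by positivity, ?_⟩
  intro k hk hN ξ ξ₁ hξ hξ₁
  have h1 := abs_le.1 hξ
  have h2 := abs_le.1 hξ₁
  have hξ₁pos : 0 ≤ ξ₁ := by nlinarith [h1.1, h1.2, h2.1, h2.2]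
  have hle : ξ - ξ₁ ≤ 0 := by nlinarith [h1.1, h1.2, h2.1, h2.2]
  have e1 : |ξ₁| = ξ₁ := abs_of_nonneg hξ₁pos
  have e2 : |ξ - ξ₁| = -(ξ - ξ₁) := abs_of_nonpos hle
  have key : omegaBO ξ₁ + omegaBO (ξ - ξ₁) + (2:ℝ)^(k+1) * ξ
      = ξ^2 + 2 * ξ * ((2:ℝ)^k - ξ₁) := by
    simp only [omegaBO, e1, e2, pow_succ]
    ring
  rw [key]
  have h3 : |(2:ℝ)^k - ξ₁| ≤ C₀ := by rw [abs_sub_comm]; exact hξ₁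
  calc |ξ^2 + 2 * ξ * ((2:ℝ)^k - ξ₁)|
      ≤ |ξ^2| + |2 * ξ * ((2:ℝ)^k - ξ₁)| := abs_add_le _ _
    _ ≤ C₀^2 + 2 * C₀ * C₀ := by
        gcongr ?_ + ?_
        · rw [abs_pow]; exact pow_le_pow_left₀ (abs_nonneg _) hξ 2
        · rw [abs_mul, abs_mul, abs_two]
          nlinarith [abs_nonneg ξ, abs_nonneg ((2:ℝ)^k - ξ₁), hξ, h3, hC₀.le]
    _ = 3 * C₀^2 := by ring
end

section
/- For real numbers ξ, ξ₁ with |ξ₁| ≤ C₀ and |ξ - 2^k| ≤ C₀ (k a positive integer, 2^k ≥ 2C₀), with ω(ξ) = -ξ|ξ|, one has |2^(k+1)·ξ₁ - ω(ξ - ξ₁) + ω(ξ)| ≤ C for a constant C depending only on C₀. -/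
theorem resonance_identity_high_low (C₀ : ℝ) (hC₀ : 0 < C₀) :
    ∃ C : ℝ, 0 < C ∧ ∀ k : ℕ, 0 < k → 2 * C₀ ≤ (2:ℝ)^k → ∀ ξ ξ₁ : ℝ,
      |ξ₁| ≤ C₀ → |ξ - (2:ℝ)^k| ≤ C₀ →
      |(2:ℝ)^(k+1) * ξ₁ - omegaBO (ξ - ξ₁) + omegaBO ξ| ≤ C := by
  refine ⟨3 * C₀ ^ 2, by positivity, ?_⟩
  intro k hk h2k ξ ξ₁ h1 h2
  obtain ⟨h1a, h1b⟩ := abs_le.mp h1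
  obtain ⟨h2a, h2b⟩ := abs_le.mp h2
  have hξ : 0 ≤ ξ := by linarith
  have hξξ₁ : 0 ≤ ξ - ξ₁ := by linarith
  rw [omegaBO, omegaBO, abs_of_nonneg hξ, abs_of_nonneg hξξ₁]
  have key : (2:ℝ)^(k+1) * ξ₁ - -(ξ - ξ₁) * (ξ - ξ₁) + -ξ * ξ
      = 2 * ξ₁ * ((2:ℝ)^k - ξ) + ξ₁ ^ 2 := by ring
  rw [key]
  calc |2 * ξ₁ * ((2:ℝ)^k - ξ) + ξ₁ ^ 2|
      ≤ |2 * ξ₁ * ((2:ℝ)^k - ξ)| + |ξ₁ ^ 2| := abs_add_le _ _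
    _ = 2 * |ξ₁| * |ξ - (2:ℝ)^k| + |ξ₁| ^ 2 := by
        rw [abs_mul, abs_mul, abs_sub_comm, ← abs_pow]
        simp [abs_of_nonneg, two_pos.le]
    _ ≤ 2 * C₀ * C₀ + C₀ ^ 2 := by
        have h0 : 0 ≤ |ξ₁| := abs_nonneg _
        nlinarith [abs_nonneg (ξ - (2:ℝ)^k)]
    _ = 3 * C₀ ^ 2 := by ring
end
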